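/- Let T > 0, λ ≥ 0, let y : [0,T] → ℝ be a nonnegative C¹ function and g : [0,T] → ℝ a nonnegative continuous function such that y'(t) + λ y(t) ≤ g(t)·√(y(t)) for all t ∈ [0,T]. Then for all t ∈ [0,T]: √(y(t)) + (λ/2)∫₀ᵗ √(y(τ)) dτ ≤ √(y(0)) + ∫₀ᵗ g(τ) dτ. -/

import Mathlib

/-! Dividing by `√y` fails at the zeros of `y`, so one works with `z = √(y + ε²)` for `ε > 0`:
it is differentiable with `z' = y' / (2z) ≤ g/2 - (λ/2)(√y - ε)`, because `√y ≤ z` and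
`(√y - ε) z ≤ y`. Integrating gives the inequality with `√(y 0 + ε²)` and an error `(λ/2) ε t`;
letting `ε → 0` yields it with `∫ g / 2`, hence with `∫ g` since `g ≥ 0`. -/

open Set Filter Topology MeasureTheory

lemma sqrt_add_sq_le_sqrt_add {x ε : ℝ} (hε : 0 ≤ ε) : √(x + ε ^ 2) ≤ √x + ε := by
  rcases le_or_gt 0 x with hx | hx
  · rw [Real.sqrt_le_left (by positivity)]
    nlinarith [Real.sq_sqrt hx, Real.sqrt_nonneg x]
  · rw [Real.sqrt_eq_zero_of_nonpos hx.le, zero_add, Real.sqrt_le_left hε]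
    linarith

lemma sub_mul_sqrt_add_sq_le {x ε : ℝ} (hx : 0 ≤ x) (hε : 0 ≤ ε) :
    (√x - ε) * √(x + ε ^ 2) ≤ x := by
  rcases le_or_gt (√x) ε with h | h
  · exact (mul_nonpos_of_nonpos_of_nonneg (sub_nonpos.2 h) (Real.sqrt_nonneg _)).trans hx
  · calc (√x - ε) * √(x + ε ^ 2) ≤ (√x - ε) * (√x + ε) :=
          mul_le_mul_of_nonneg_left (sqrt_add_sq_le_sqrt_add hε) (sub_nonneg.2 h.le)
      _ ≤ x := by nlinarith [Real.sq_sqrt hx]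

lemma div_two_sqrt_add_sq_le {y y' g lam ε : ℝ} (hy : 0 ≤ y) (hg : 0 ≤ g) (hlam : 0 ≤ lam)
    (hε : 0 < ε) (h : y' + lam * y ≤ g * √y) :
    y' / (2 * √(y + ε ^ 2)) ≤ g / 2 - lam / 2 * (√y - ε) := by
  have hz : 0 < √(y + ε ^ 2) := Real.sqrt_pos.2 (by positivity)
  have hsz : √y ≤ √(y + ε ^ 2) := Real.sqrt_le_sqrt (by nlinarith)
  rw [div_le_iff₀ (by positivity)]
  nlinarith [mul_le_mul_of_nonneg_left hsz hg,
    mul_le_mul_of_nonneg_left (sub_mul_sqrt_add_sq_le hy hε.le) hlam]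

section Regularization

variable {a b lam ε : ℝ} {y y' g : ℝ → ℝ}

lemma sqrt_add_sq_sub_le_integral (hab : a ≤ b) (hε : 0 < ε) (hlam : 0 ≤ lam)
    (hyc : ContinuousOn y (Icc a b)) (hy : ∀ t ∈ Ioo a b, HasDerivAt y (y' t) t)
    (hynn : ∀ t ∈ Ioo a b, 0 ≤ y t) (hg : IntervalIntegrable g volume a b)
    (hgnn : ∀ t ∈ Ioo a b, 0 ≤ g t)
    (hineq : ∀ t ∈ Ioo a b, y' t + lam * y t ≤ g t * √(y t)) :
    √(y b + ε ^ 2) - √(y a + ε ^ 2) ≤ ∫ t in a..b, (g t / 2 - lam / 2 * (√(y t) - ε)) := by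
  have hsqrt : IntervalIntegrable (fun t => √(y t)) volume a b :=
    (Real.continuous_sqrt.comp_continuousOn hyc).intervalIntegrable_of_Icc hab
  refine intervalIntegral.sub_le_integral_of_hasDeriv_right_of_le hab
    (Real.continuous_sqrt.comp_continuousOn (hyc.add continuousOn_const))
    (fun t ht => (((hy t ht).add_const (ε ^ 2)).sqrt ?_).hasDerivWithinAt) ?_
    (fun t ht => div_two_sqrt_add_sq_le (hynn t ht) (hgnn t ht) hlam hε (hineq t ht))
  · have := hynn t ht; positivity
  · rw [← intervalIntegrable_iff_integrableOn_Icc_of_le hab]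
    exact (hg.div_const 2).sub ((hsqrt.sub intervalIntegrable_const).const_mul _)

theorem sqrt_add_integral_sqrt_le (hab : a ≤ b) (hlam : 0 ≤ lam)
    (hyc : ContinuousOn y (Icc a b)) (hy : ∀ t ∈ Ioo a b, HasDerivAt y (y' t) t)
    (hynn : ∀ t ∈ Ioo a b, 0 ≤ y t) (hg : IntervalIntegrable g volume a b)
    (hgnn : ∀ t ∈ Ioo a b, 0 ≤ g t)
    (hineq : ∀ t ∈ Ioo a b, y' t + lam * y t ≤ g t * √(y t)) :
    √(y b) + lam / 2 * ∫ t in a..b, √(y t) ≤ √(y a) + (∫ t in a..b, g t) / 2 := by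
  have hsqrt : IntervalIntegrable (fun t => √(y t)) volume a b :=
    (Real.continuous_sqrt.comp_continuousOn hyc).intervalIntegrable_of_Icc hab
  have hreg : ∀ ε > 0, √(y b) + lam / 2 * (∫ t in a..b, √(y t)) - (∫ t in a..b, g t) / 2
      ≤ √(y a + ε ^ 2) + lam / 2 * (b - a) * ε := by
    intro ε hε
    have h := sqrt_add_sq_sub_le_integral hab hε hlam hyc hy hynn hg hgnn hineq
    rw [intervalIntegral.integral_sub (hg.div_const 2)
        ((hsqrt.sub intervalIntegrable_const).const_mul _),
      intervalIntegral.integral_div, intervalIntegral.integral_const_mul,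
      intervalIntegral.integral_sub hsqrt intervalIntegrable_const,
      intervalIntegral.integral_const, smul_eq_mul] at h
    linarith [Real.sqrt_le_sqrt (le_add_of_nonneg_right (sq_nonneg ε) : y b ≤ y b + ε ^ 2)]
  have hlim : Tendsto (fun ε => √(y a + ε ^ 2) + lam / 2 * (b - a) * ε) (𝓝[>] 0)
      (𝓝 (√(y a))) := by
    have : Continuous fun ε => √(y a + ε ^ 2) + lam / 2 * (b - a) * ε := by fun_prop
    simpa using (this.tendsto 0).mono_left nhdsWithin_le_nhds
  have := ge_of_tendsto hlim (eventually_nhdsWithin_of_forall hreg)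
  linarith

end Regularization

theorem nonlinear_gronwall_sqrt_general (T lam : ℝ) (hlam : 0 ≤ lam)
    (y y' g : ℝ → ℝ)
    (hy : ∀ t ∈ Set.Icc (0:ℝ) T, HasDerivAt y (y' t) t)
    (hynn : ∀ t ∈ Set.Icc (0:ℝ) T, 0 ≤ y t)
    (hgc : ContinuousOn g (Set.Icc (0:ℝ) T))
    (hgnn : ∀ t ∈ Set.Icc (0:ℝ) T, 0 ≤ g t)
    (hineq : ∀ t ∈ Set.Icc (0:ℝ) T, y' t + lam * y t ≤ g t * Real.sqrt (y t)) :
    ∀ t ∈ Set.Icc (0:ℝ) T,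
      Real.sqrt (y t) + (lam / 2) * ∫ τ in (0:ℝ)..t, Real.sqrt (y τ)
        ≤ Real.sqrt (y 0) + ∫ τ in (0:ℝ)..t, g τ := by
  intro t ⟨ht0, htT⟩
  have hsub : Icc 0 t ⊆ Icc 0 T := Icc_subset_Icc le_rfl htT
  have hIoo : Ioo 0 t ⊆ Icc 0 T := Ioo_subset_Icc_self.trans hsub
  have hg_nonneg : 0 ≤ ∫ τ in (0:ℝ)..t, g τ :=
    intervalIntegral.integral_nonneg ht0 fun τ hτ => hgnn τ (hsub hτ)
  have := sqrt_add_integral_sqrt_le ht0 hlam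
    (fun τ hτ => (hy τ (hsub hτ)).continuousAt.continuousWithinAt)
    (fun τ hτ => hy τ (hIoo hτ)) (fun τ hτ => hynn τ (hIoo hτ))
    ((hgc.mono hsub).intervalIntegrable_of_Icc ht0) (fun τ hτ => hgnn τ (hIoo hτ))
    (fun τ hτ => hineq τ (hIoo hτ))
  linarith

theorem nonlinear_gronwall_sqrt (T lam : ℝ) (hT : 0 < T) (hlam : 0 ≤ lam)
    (y y' g : ℝ → ℝ)
    (hy : ∀ t ∈ Set.Icc (0:ℝ) T, HasDerivAt y (y' t) t)
    (hy' : ContinuousOn y' (Set.Icc (0:ℝ) T))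
    (hynn : ∀ t ∈ Set.Icc (0:ℝ) T, 0 ≤ y t)
    (hgc : ContinuousOn g (Set.Icc (0:ℝ) T))
    (hgnn : ∀ t ∈ Set.Icc (0:ℝ) T, 0 ≤ g t)
    (hineq : ∀ t ∈ Set.Icc (0:ℝ) T, y' t + lam * y t ≤ g t * Real.sqrt (y t)) :
    ∀ t ∈ Set.Icc (0:ℝ) T,
      Real.sqrt (y t) + (lam / 2) * ∫ τ in (0:ℝ)..t, Real.sqrt (y τ)
        ≤ Real.sqrt (y 0) + ∫ τ in (0:ℝ)..t, g τ :=
  nonlinear_gronwall_sqrt_general T lam hlam y y' g hy hynn hgc hgnn hineq
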